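/- Let a DMIC have transition probability factorizing as p(y1,y2|x1,x2) = p(y2|x1,x2) q(y1|x1,y2) (Markov chain X2 - (X1,Y2) - Y1). Then for every finite-valued random variable U with joint law p(u,x1,x2,y1,y2) = p(u) p(x1,x2|u) p(y1,y2|x1,x2), it holds that I(U;Y1|X1) <= I(U;Y2|X1). -/

import Mathlib

open scoped BigOperators

noncomputable section

namespace IT

/-- A probability mass function on a finite type. -/
def IsPMF {α : Type*} [Fintype α] (p : α → ℝ) : Prop :=
  (∀ a, 0 ≤ p a) ∧ ∑ a, p a = 1

/-- The distribution (pushforward) of a random variable `X` under the pmf `μ`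
on the sample space `Ω`. -/
def distOf {Ω α : Type*} [Fintype Ω] [DecidableEq α] (μ : Ω → ℝ) (X : Ω → α) : α → ℝ :=
  fun a => ∑ ω, if X ω = a then μ ω else 0

/-- Shannon entropy (base-2 logarithms) of a pmf on a finite type.
(Recall `Real.logb 2 0 = 0`, so the `0 log 0 = 0` convention is automatic.) -/
def ent {α : Type*} [Fintype α] (p : α → ℝ) : ℝ := -∑ a, p a * Real.logb 2 (p a)

/-- Entropy `H(X)` of a finite-valued random variable `X` on `(Ω, μ)`. -/
def H {Ω α : Type*} [Fintype Ω] [Fintype α] [DecidableEq α] (μ : Ω → ℝ) (X : Ω → α) : ℝ :=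
  ent (distOf μ X)

/-- Mutual information `I(X;Y)`. -/
def MI {Ω α β : Type*} [Fintype Ω] [Fintype α] [DecidableEq α] [Fintype β] [DecidableEq β]
    (μ : Ω → ℝ) (X : Ω → α) (Y : Ω → β) : ℝ :=
  H μ X + H μ Y - H μ (fun ω => (X ω, Y ω))

/-- Conditional mutual information `I(X;Y|Z)`. -/
def CMI {Ω α β γ : Type*} [Fintype Ω] [Fintype α] [DecidableEq α] [Fintype β] [DecidableEq β]
    [Fintype γ] [DecidableEq γ] (μ : Ω → ℝ) (X : Ω → α) (Y : Ω → β) (Z : Ω → γ) : ℝ :=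
  H μ (fun ω => (X ω, Z ω)) + H μ (fun ω => (Y ω, Z ω))
    - H μ (fun ω => (X ω, Y ω, Z ω)) - H μ Z

/-- `B` is conditionally independent of `A` given `C` (a Markov chain `A - C - B`). -/
def CondIndep {Ω α β γ : Type*} [Fintype Ω] [DecidableEq α] [DecidableEq β] [DecidableEq γ]
    (μ : Ω → ℝ) (A : Ω → α) (B : Ω → β) (C : Ω → γ) : Prop :=
  ∀ a b c,
    distOf μ (fun ω => (A ω, B ω, C ω)) (a, b, c) * distOf μ C c =
      distOf μ (fun ω => (A ω, C ω)) (a, c) * distOf μ (fun ω => (B ω, C ω)) (b, c)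

variable {A1 A2 B1 B2 : Type*}

/-- A discrete memoryless interference channel with input alphabets `A1, A2` and
output alphabets `B1, B2`: every pair of inputs yields a pmf on output pairs. -/
def IsChannel [Fintype B1] [Fintype B2] (W : A1 → A2 → B1 × B2 → ℝ) : Prop :=
  ∀ x1 x2, IsPMF (W x1 x2)

/-- DMZIC with weak interference: the transition probability factorizes as
`p(y1,y2|x1,x2) = p(y2|x2) q(y1|x1,y2)`, i.e. one-sided interference together with
the Markov chain `X2 - (X1,Y2) - Y1`. -/
def WeakZ [Fintype B1] [Fintype B2] (W : A1 → A2 → B1 × B2 → ℝ) : Prop :=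
  ∃ (p2 : A2 → B2 → ℝ) (q : A1 → B2 → B1 → ℝ),
    (∀ x2, IsPMF (p2 x2)) ∧ (∀ x1 y2, IsPMF (q x1 y2)) ∧
      ∀ x1 x2 y1 y2, W x1 x2 (y1, y2) = p2 x2 y2 * q x1 y2 y1

/-- Factorization `p(y1,y2|x1,x2) = p(y2|x1,x2) q(y1|x1,y2)`, i.e. the Markov chain
`X2 - (X1,Y2) - Y1`. -/
def ChainX2X1Y2Y1 [Fintype B1] [Fintype B2] (W : A1 → A2 → B1 × B2 → ℝ) : Prop :=
  ∃ (pa : A1 → A2 → B2 → ℝ) (q : A1 → B2 → B1 → ℝ),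
    (∀ x1 x2, IsPMF (pa x1 x2)) ∧ (∀ x1 y2, IsPMF (q x1 y2)) ∧
      ∀ x1 x2 y1 y2, W x1 x2 (y1, y2) = pa x1 x2 y2 * q x1 y2 y1

/-- The `n`-fold memoryless extension of the channel `W`. -/
def nFold (W : A1 → A2 → B1 × B2 → ℝ) (n : ℕ) (a : Fin n → A1) (b : Fin n → A2)
    (y : (Fin n → B1) × (Fin n → B2)) : ℝ :=
  ∏ i, W (a i) (b i) (y.1 i, y.2 i)

/-- An `(n, M1, M2)` code for the interference channel. -/
structure Code (A1 A2 B1 B2 : Type*) (n M1 M2 : ℕ) where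
  enc1 : Fin M1 → Fin n → A1
  enc2 : Fin M2 → Fin n → A2
  dec1 : (Fin n → B1) → Fin M1
  dec2 : (Fin n → B2) → Fin M2

/-- Average probability of error at receiver 1 (messages uniform and independent). -/
def err1 [Fintype B1] [Fintype B2] (W : A1 → A2 → B1 × B2 → ℝ) {n M1 M2 : ℕ}
    (c : Code A1 A2 B1 B2 n M1 M2) : ℝ :=
  ((M1 : ℝ) * (M2 : ℝ))⁻¹ *
    ∑ w1 : Fin M1, ∑ w2 : Fin M2, ∑ y : (Fin n → B1) × (Fin n → B2),
      if c.dec1 y.1 ≠ w1 then nFold W n (c.enc1 w1) (c.enc2 w2) y else 0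

/-- Average probability of error at receiver 2 (messages uniform and independent). -/
def err2 [Fintype B1] [Fintype B2] (W : A1 → A2 → B1 × B2 → ℝ) {n M1 M2 : ℕ}
    (c : Code A1 A2 B1 B2 n M1 M2) : ℝ :=
  ((M1 : ℝ) * (M2 : ℝ))⁻¹ *
    ∑ w1 : Fin M1, ∑ w2 : Fin M2, ∑ y : (Fin n → B1) × (Fin n → B2),
      if c.dec2 y.2 ≠ w2 then nFold W n (c.enc1 w1) (c.enc2 w2) y else 0

/-- A (nonnegative) rate pair `(R1, R2)` is achievable if there are codes of blocklength `n`,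
with at least `2 ^ (n R1)` and `2 ^ (n R2)` messages, whose average error probabilities at
the two receivers can be made arbitrarily small. -/
def Achievable [Fintype B1] [Fintype B2] (W : A1 → A2 → B1 × B2 → ℝ) (R1 R2 : ℝ) : Prop :=
  0 ≤ R1 ∧ 0 ≤ R2 ∧ ∀ ε : ℝ, 0 < ε →
    ∃ (n M1 M2 : ℕ) (c : Code A1 A2 B1 B2 n M1 M2), 0 < n ∧
      (2 : ℝ) ^ ((n : ℝ) * R1) ≤ (M1 : ℝ) ∧ (2 : ℝ) ^ ((n : ℝ) * R2) ≤ (M2 : ℝ) ∧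
      err1 W c ≤ ε ∧ err2 W c ≤ ε

/-- The sum-rate capacity: the supremum of `R1 + R2` over achievable rate pairs. -/
def sumCapacity [Fintype B1] [Fintype B2] (W : A1 → A2 → B1 × B2 → ℝ) : ℝ :=
  sSup {r : ℝ | ∃ R1 R2 : ℝ, Achievable W R1 R2 ∧ r = R1 + R2}

/-- The capacity region: the closure of the set of achievable rate pairs. -/
def capacityRegion [Fintype B1] [Fintype B2] (W : A1 → A2 → B1 × B2 → ℝ) : Set (ℝ × ℝ) :=
  closure {p : ℝ × ℝ | Achievable W p.1 p.2}

/-- The joint pmf of `(X1, X2, Y1, Y2)` when the product input `p1 × p2` is fed to `W`. -/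
def jointOf (W : A1 → A2 → B1 × B2 → ℝ) (p1 : A1 → ℝ) (p2 : A2 → ℝ) :
    A1 × A2 × B1 × B2 → ℝ :=
  fun z => p1 z.1 * p2 z.2.1 * W z.1 z.2.1 (z.2.2.1, z.2.2.2)

/-- Coordinate projections on `A1 × A2 × B1 × B2`. -/
def pX1 : A1 × A2 × B1 × B2 → A1 := fun z => z.1
def pX2 : A1 × A2 × B1 × B2 → A2 := fun z => z.2.1
def pY1 : A1 × A2 × B1 × B2 → B1 := fun z => z.2.2.1
def pY2 : A1 × A2 × B1 × B2 → B2 := fun z => z.2.2.2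

/-- The binary entropy function (base-2 logarithms). -/
def h2 (t : ℝ) : ℝ := -(t * Real.logb 2 t) - (1 - t) * Real.logb 2 (1 - t)

end IT

/-!
Expanding `I(U; Y₁, Y₂ | X₁)` by the chain rule in both orders gives
`I(U;Y₂|X₁) + I(U;Y₁|X₁,Y₂) = I(U;Y₁|X₁) + I(U;Y₂|X₁,Y₁)`. The factorization of the channel
makes `U - (X₁,Y₂) - Y₁` a Markov chain, so `I(U;Y₁|X₁,Y₂) = 0`, while `I(U;Y₂|X₁,Y₁) ≥ 0`:
conditional mutual information is the Kullback–Leibler divergence of the joint law from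
`P(x|z) P(y|z) P(z)`, which is nonnegative by Gibbs' inequality `log x ≤ x - 1`.
-/

namespace IT

open Finset Real

section Marginals

variable {Ω α β γ : Type*} [Fintype Ω] [DecidableEq α] [DecidableEq β] [DecidableEq γ]
  {μ : Ω → ℝ}

theorem distOf_nonneg (hμ : ∀ ω, 0 ≤ μ ω) (X : Ω → α) (a : α) : 0 ≤ distOf μ X a :=
  sum_nonneg fun ω _ => ite_nonneg (hμ ω) le_rfl

theorem distOf_le_distOf_comp (hμ : ∀ ω, 0 ≤ μ ω) (X : Ω → α) (φ : α → β) (a : α) :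
    distOf μ X a ≤ distOf μ (fun ω => φ (X ω)) (φ a) :=
  sum_le_sum fun ω _ => by
    by_cases hX : X ω = a
    · simp [hX]
    · simpa [hX] using ite_nonneg (hμ ω) le_rfl

theorem distOf_comp_pos (hμ : ∀ ω, 0 ≤ μ ω) {X : Ω → α} (φ : α → β) {a : α}
    (ha : 0 < distOf μ X a) : 0 < distOf μ (fun ω => φ (X ω)) (φ a) :=
  ha.trans_le (distOf_le_distOf_comp hμ X φ a)

theorem sum_distOf_mul [Fintype α] (X : Ω → α) (f : α → ℝ) :
    ∑ a, distOf μ X a * f a = ∑ ω, μ ω * f (X ω) := by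
  simp only [distOf, sum_mul, ite_mul, zero_mul]
  rw [sum_comm]
  simp

theorem sum_distOf [Fintype α] (X : Ω → α) : ∑ a, distOf μ X a = ∑ ω, μ ω := by
  simpa using sum_distOf_mul (μ := μ) X fun _ => 1

theorem sum_distOf_fst [Fintype α] (X : Ω → α) (Y : Ω → β) (b : β) :
    ∑ a, distOf μ (fun ω => (X ω, Y ω)) (a, b) = distOf μ Y b := by
  simp only [distOf]
  rw [sum_comm]
  refine sum_congr rfl fun ω _ => ?_
  by_cases h : Y ω = b <;> simp [Prod.ext_iff, h]

theorem sum_distOf_snd [Fintype β] (X : Ω → α) (Y : Ω → β) (Z : Ω → γ) (a : α) (c : γ) :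
    ∑ b, distOf μ (fun ω => (X ω, Y ω, Z ω)) (a, b, c) =
      distOf μ (fun ω => (X ω, Z ω)) (a, c) := by
  simp only [distOf]
  rw [sum_comm]
  refine sum_congr rfl fun ω _ => ?_
  by_cases hX : X ω = a <;> by_cases hZ : Z ω = c <;> simp [Prod.ext_iff, hX, hZ]

theorem condIndep_of_distOf_eq_mul [Fintype α] [Fintype β] {X : Ω → α} {Y : Ω → β}
    {Z : Ω → γ} (f : α → γ → ℝ) (g : β → γ → ℝ)
    (h : ∀ a b c, distOf μ (fun ω => (X ω, Y ω, Z ω)) (a, b, c) = f a c * g b c) :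
    CondIndep μ X Y Z := by
  intro a b c
  have hXZ : distOf μ (fun ω => (X ω, Z ω)) (a, c) = f a c * ∑ b, g b c := by
    simp only [← sum_distOf_snd X Y Z, h, mul_sum]
  have hYZ : distOf μ (fun ω => (Y ω, Z ω)) (b, c) = (∑ a, f a c) * g b c := by
    simp only [← sum_distOf_fst X (fun ω => (Y ω, Z ω)), h, sum_mul]
  have hZ : distOf μ Z c = (∑ a, f a c) * ∑ b, g b c := by
    simp only [← sum_distOf_fst Y Z, ← sum_distOf_fst X (fun ω => (Y ω, Z ω)), h, sum_mul_sum]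
    exact sum_comm
  rw [h, hXZ, hYZ, hZ]
  ring

end Marginals

section Entropy

variable {Ω α β γ δ : Type*} [Fintype Ω] [Fintype α] [DecidableEq α] [Fintype β] [DecidableEq β]
  [Fintype γ] [DecidableEq γ] [Fintype δ] [DecidableEq δ] {μ : Ω → ℝ}

theorem H_eq_neg_sum (X : Ω → α) : H μ X = -∑ ω, μ ω * logb 2 (distOf μ X (X ω)) := by
  rw [H, ent, sum_distOf_mul X fun a => logb 2 (distOf μ X a)]

theorem H_congr_equiv (e : α ≃ β) {X : Ω → α} {Y : Ω → β} (h : ∀ ω, Y ω = e (X ω)) :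
    H μ Y = H μ X := by
  have hd : ∀ a, distOf μ Y (e a) = distOf μ X a := fun a =>
    sum_congr rfl fun ω _ => by simp [h ω]
  simp only [H_eq_neg_sum, h, hd]

theorem CMI_prod_eq_add (X : Ω → α) (Y₁ : Ω → β) (Y₂ : Ω → γ) (Z : Ω → δ) :
    CMI μ X (fun ω => (Y₁ ω, Y₂ ω)) Z = CMI μ X Y₂ Z + CMI μ X Y₁ (fun ω => (Z ω, Y₂ ω)) := by
  let e : β × δ × γ ≃ (β × γ) × δ :=
    ((Equiv.refl β).prodCongr (Equiv.prodComm δ γ)).trans (Equiv.prodAssoc β γ δ).symm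
  have h₁ : H μ (fun ω => (Y₂ ω, Z ω)) = H μ (fun ω => (Z ω, Y₂ ω)) :=
    H_congr_equiv (Equiv.prodComm δ γ) fun _ => rfl
  have h₂ : H μ (fun ω => (X ω, Y₂ ω, Z ω)) = H μ (fun ω => (X ω, Z ω, Y₂ ω)) :=
    H_congr_equiv ((Equiv.refl α).prodCongr (Equiv.prodComm δ γ)) fun _ => rfl
  have h₃ : H μ (fun ω => ((Y₁ ω, Y₂ ω), Z ω)) = H μ (fun ω => (Y₁ ω, Z ω, Y₂ ω)) :=
    H_congr_equiv e fun _ => rfl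
  have h₄ :
      H μ (fun ω => (X ω, (Y₁ ω, Y₂ ω), Z ω)) = H μ (fun ω => (X ω, Y₁ ω, Z ω, Y₂ ω)) :=
    H_congr_equiv ((Equiv.refl α).prodCongr e) fun _ => rfl
  simp only [CMI]
  linarith

theorem CMI_comp_equiv (e : β ≃ γ) (X : Ω → α) (Y : Ω → β) (Z : Ω → δ) :
    CMI μ X (fun ω => e (Y ω)) Z = CMI μ X Y Z := by
  have h₁ : H μ (fun ω => (e (Y ω), Z ω)) = H μ (fun ω => (Y ω, Z ω)) :=
    H_congr_equiv (e.prodCongr (Equiv.refl δ)) fun _ => rfl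
  have h₂ : H μ (fun ω => (X ω, e (Y ω), Z ω)) = H μ (fun ω => (X ω, Y ω, Z ω)) :=
    H_congr_equiv ((Equiv.refl α).prodCongr (e.prodCongr (Equiv.refl δ))) fun _ => rfl
  simp only [CMI, h₁, h₂]

end Entropy

theorem sum_mul_log_div_le {ι : Type*} [Fintype ι] {w v : ι → ℝ} (hw : ∀ i, 0 ≤ w i)
    (hv : ∀ i, 0 ≤ v i) (hwv : ∀ i, 0 < w i → 0 < v i) :
    ∑ i, w i * log (v i / w i) ≤ ∑ i, v i - ∑ i, w i := by
  rw [← sum_sub_distrib]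
  refine sum_le_sum fun i _ => ?_
  rcases (hw i).eq_or_lt with h0 | hpos
  · simp [← h0, hv i]
  calc w i * log (v i / w i) ≤ w i * (v i / w i - 1) :=
        mul_le_mul_of_nonneg_left (log_le_sub_one_of_pos (div_pos (hwv i hpos) hpos)) hpos.le
    _ = v i - w i := by field_simp

section CondIndepLaw

variable {Ω α β γ : Type*} [Fintype Ω] [DecidableEq α] [DecidableEq β] [DecidableEq γ]
  {μ : Ω → ℝ}

/-- The law `P(x|z) P(y|z) P(z)` of `(X, Y, Z)` made conditionally independent given `Z`. -/
def condIndepLaw (μ : Ω → ℝ) (X : Ω → α) (Y : Ω → β) (Z : Ω → γ) (t : α × β × γ) : ℝ :=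
  distOf μ (fun ω => (X ω, Z ω)) (t.1, t.2.2) * distOf μ (fun ω => (Y ω, Z ω)) (t.2.1, t.2.2)
    / distOf μ Z t.2.2

theorem condIndepLaw_nonneg (hμ : ∀ ω, 0 ≤ μ ω) (X : Ω → α) (Y : Ω → β) (Z : Ω → γ)
    (t : α × β × γ) : 0 ≤ condIndepLaw μ X Y Z t :=
  div_nonneg (mul_nonneg (distOf_nonneg hμ _ _) (distOf_nonneg hμ _ _)) (distOf_nonneg hμ _ _)

theorem condIndepLaw_pos (hμ : ∀ ω, 0 ≤ μ ω) {X : Ω → α} {Y : Ω → β} {Z : Ω → γ}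
    {t : α × β × γ} (ht : 0 < distOf μ (fun ω => (X ω, Y ω, Z ω)) t) :
    0 < condIndepLaw μ X Y Z t :=
  div_pos (mul_pos (distOf_comp_pos hμ (fun t : α × β × γ => (t.1, t.2.2)) ht)
    (distOf_comp_pos hμ (fun t : α × β × γ => (t.2.1, t.2.2)) ht))
    (distOf_comp_pos hμ (fun t : α × β × γ => t.2.2) ht)

variable [Fintype α] [Fintype β] [Fintype γ]

theorem sum_condIndepLaw (X : Ω → α) (Y : Ω → β) (Z : Ω → γ) :
    ∑ t, condIndepLaw μ X Y Z t = ∑ ω, μ ω := by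
  have hc : ∀ c, ∑ a, ∑ b, condIndepLaw μ X Y Z (a, b, c) = distOf μ Z c := fun c => by
    simp only [condIndepLaw, ← sum_div, ← mul_sum, ← sum_mul, sum_distOf_fst, mul_self_div_self]
  simp only [← sum_distOf Z, ← hc, Fintype.sum_prod_type]
  conv_rhs => rw [sum_comm]
  exact sum_congr rfl fun a _ => sum_comm

theorem CMI_eq_sum (X : Ω → α) (Y : Ω → β) (Z : Ω → γ) :
    CMI μ X Y Z = ∑ t, distOf μ (fun ω => (X ω, Y ω, Z ω)) t *
      (logb 2 (distOf μ (fun ω => (X ω, Y ω, Z ω)) t) + logb 2 (distOf μ Z t.2.2)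
        - logb 2 (distOf μ (fun ω => (X ω, Z ω)) (t.1, t.2.2))
        - logb 2 (distOf μ (fun ω => (Y ω, Z ω)) (t.2.1, t.2.2))) := by
  rw [sum_distOf_mul, CMI]
  simp only [H_eq_neg_sum, ← sum_sub_distrib, ← sum_add_distrib, ← sum_neg_distrib]
  refine sum_congr rfl fun ω _ => ?_
  ring

theorem CMI_eq_neg_sum_mul_log_div (hμ : ∀ ω, 0 ≤ μ ω) (X : Ω → α) (Y : Ω → β) (Z : Ω → γ) :
    CMI μ X Y Z = -(∑ t, distOf μ (fun ω => (X ω, Y ω, Z ω)) t *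
      log (condIndepLaw μ X Y Z t / distOf μ (fun ω => (X ω, Y ω, Z ω)) t)) / log 2 := by
  rw [CMI_eq_sum, neg_div, sum_div, ← sum_neg_distrib]
  refine sum_congr rfl fun t _ => ?_
  rcases (distOf_nonneg hμ (fun ω => (X ω, Y ω, Z ω)) t).eq_or_lt with h0 | ht
  · simp [← h0]
  have hXZ := distOf_comp_pos hμ (fun t : α × β × γ => (t.1, t.2.2)) ht
  have hYZ := distOf_comp_pos hμ (fun t : α × β × γ => (t.2.1, t.2.2)) ht
  have hZ := distOf_comp_pos hμ (fun t : α × β × γ => t.2.2) ht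
  rw [condIndepLaw, log_div (by positivity) ht.ne', log_div (by positivity) hZ.ne',
    log_mul hXZ.ne' hYZ.ne']
  simp only [logb]
  ring

theorem CMI_nonneg (hμ : ∀ ω, 0 ≤ μ ω) (X : Ω → α) (Y : Ω → β) (Z : Ω → γ) :
    0 ≤ CMI μ X Y Z := by
  rw [CMI_eq_neg_sum_mul_log_div hμ]
  refine div_nonneg (neg_nonneg.mpr ?_) (log_nonneg one_le_two)
  calc _ ≤ ∑ t, condIndepLaw μ X Y Z t - ∑ t, distOf μ (fun ω => (X ω, Y ω, Z ω)) t :=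
        sum_mul_log_div_le (distOf_nonneg hμ _) (condIndepLaw_nonneg hμ X Y Z)
          fun _ => condIndepLaw_pos hμ
    _ = 0 := by rw [sum_condIndepLaw, sum_distOf, sub_self]

theorem CMI_eq_zero_of_condIndep (hμ : ∀ ω, 0 ≤ μ ω) {X : Ω → α} {Y : Ω → β} {Z : Ω → γ}
    (h : CondIndep μ X Y Z) : CMI μ X Y Z = 0 := by
  have hlaw : ∀ t, distOf μ (fun ω => (X ω, Y ω, Z ω)) t *
      log (condIndepLaw μ X Y Z t / distOf μ (fun ω => (X ω, Y ω, Z ω)) t) = 0 := by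
    rintro ⟨a, b, c⟩
    rcases (distOf_nonneg hμ (fun ω => (X ω, Y ω, Z ω)) (a, b, c)).eq_or_lt with h0 | ht
    · simp [← h0]
    have hZ := distOf_comp_pos hμ (fun t : α × β × γ => t.2.2) ht
    rw [condIndepLaw, ← h a b c, mul_div_cancel_right₀ _ hZ.ne', div_self ht.ne', log_one,
      mul_zero]
  simp [CMI_eq_neg_sum_mul_log_div hμ, hlaw]

end CondIndepLaw

/-- For a DMIC satisfying the Markov chain `X2 - (X1,Y2) - Y1`, for any
finite-valued `U` with joint law `p(u) p(x1,x2|u) p(y1,y2|x1,x2)`,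
`I(U;Y1|X1) ≤ I(U;Y2|X1)`. -/
theorem mixed_chain_aux_CMI_ineq {U : Type} [Fintype U] [DecidableEq U] {A1 A2 B1 B2 : Type} [Fintype A1] [DecidableEq A1] [Fintype A2] [DecidableEq A2]
    [Fintype B1] [DecidableEq B1] [Fintype B2] [DecidableEq B2]
    (W : A1 → A2 → B1 × B2 → ℝ) (hW : IsChannel W) (hchain : ChainX2X1Y2Y1 W)
    (pIn : U × A1 × A2 → ℝ) (hpIn : IsPMF pIn) :
    let μ : U × A1 × A2 × B1 × B2 → ℝ :=
      fun z => pIn (z.1, z.2.1, z.2.2.1) * W z.2.1 z.2.2.1 (z.2.2.2.1, z.2.2.2.2)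
    CMI μ (fun z => z.1) (fun z => z.2.2.2.1) (fun z => z.2.1)
      ≤ CMI μ (fun z => z.1) (fun z => z.2.2.2.2) (fun z => z.2.1) := by
  intro μ
  obtain ⟨pa, q, -, -, hWf⟩ := hchain
  have hμ : ∀ z, 0 ≤ μ z := fun z => mul_nonneg (hpIn.1 _) ((hW _ _).1 _)
  have hMarkov :
      CondIndep μ (fun z => z.1) (fun z => z.2.2.2.1) (fun z => (z.2.1, z.2.2.2.2)) := by
    refine condIndep_of_distOf_eq_mul (fun u v => ∑ x2, pIn (u, v.1, x2) * pa v.1 x2 v.2)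
      (fun y1 v => q v.1 v.2 y1) fun u y1 ⟨x1, y2⟩ => ?_
    simp only [distOf, μ, hWf, Fintype.sum_prod_type, Prod.mk.injEq, ite_and]
    simp [sum_mul, mul_assoc]
  have hY₁Y₂ := CMI_prod_eq_add (μ := μ) (fun z => z.1) (fun z => z.2.2.2.1)
    (fun z => z.2.2.2.2) (fun z => z.2.1)
  have hY₂Y₁ := CMI_prod_eq_add (μ := μ) (fun z => z.1) (fun z => z.2.2.2.2)
    (fun z => z.2.2.2.1) (fun z => z.2.1)
  have hswap := CMI_comp_equiv (μ := μ) (Equiv.prodComm B1 B2) (fun z => z.1)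
    (fun z => (z.2.2.2.1, z.2.2.2.2)) (fun z => z.2.1)
  simp only [Equiv.prodComm_apply, Prod.swap_prod_mk] at hswap
  linarith [CMI_eq_zero_of_condIndep hμ hMarkov,
    CMI_nonneg hμ (fun z => z.1) (fun z => z.2.2.2.2) (fun z => (z.2.1, z.2.2.2.1))]

end IT
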